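/- arXiv:1811.01113 — 3 statements merged into one kernel-verified Lean document; each statement's English description precedes it below -/
import Mathlib

section
/- Let g : W → ℝᵖ be real analytic on a neighborhood W of 0 in ℝ × ℝⁿ, write g_t(x) = g(t,x), and suppose g_t(0) = 0 for all t. Suppose there exist C > 0, ε₀ > 0 and α > 0 such that ‖g₀(x)‖ ≥ C‖x‖^α for all ‖x‖ < ε₀. Let m = ⌊α⌋ + 1 and suppose that the difference (t,x) ↦ g_t(x) − g₀(x) can be written as Σ_{|β| = m} x^β H_β(t,x) for finitely many real analytic maps H_β : W → ℝᵖ, where β ranges over multi-indices of total degree m (i.e., each component of g_t − g₀ lies in the m-th power of the ideal generated by x₁, …, xₙ in the ring of analytic germs at 0 in ℝ × ℝⁿ). Then there exist δ > 0 and ε > 0 such that for all |t| < δ and all ‖x‖ < ε, g_t(x) = 0 implies x = 0. -/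
/-!
Along `g (t, x) = 0` the decomposition gives `‖g (0, x)‖ = ‖∑ x ^ β • H_β (t, x)‖ ≤ M ‖x‖ ^ m`,
where `M` bounds `∑ ‖H_β‖` near the origin. Since `m = ⌊α⌋ + 1 > α`, this contradicts the
Łojasiewicz bound `C ‖x‖ ^ α ≤ ‖g (0, x)‖` for small `x ≠ 0`.
-/

open Filter Topology

lemma abs_prod_pow_le_norm_pow {ι : Type*} [Fintype ι] (x : EuclideanSpace ℝ ι) (β : ι → ℕ) :
    |∏ i, x i ^ β i| ≤ ‖x‖ ^ ∑ i, β i := by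
  rw [← Finset.prod_pow_eq_pow_sum, Finset.abs_prod]
  refine Finset.prod_le_prod (fun i _ => abs_nonneg _) fun i _ => ?_
  rw [abs_pow]
  exact pow_le_pow_left₀ (abs_nonneg _) (PiLp.norm_apply_le x i) _

lemma norm_sum_monomial_smul_le {ι E : Type*} [Fintype ι] [SeminormedAddCommGroup E]
    [NormedSpace ℝ E] (x : EuclideanSpace ℝ ι) {S : Finset (ι → ℕ)} {m : ℕ}
    (hS : ∀ β ∈ S, ∑ i, β i = m) (v : (ι → ℕ) → E) :
    ‖∑ β ∈ S, (∏ i, x i ^ β i) • v β‖ ≤ ‖x‖ ^ m * ∑ β ∈ S, ‖v β‖ := by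
  rw [Finset.mul_sum]
  refine (norm_sum_le _ _).trans (Finset.sum_le_sum fun β hβ => ?_)
  rw [norm_smul, Real.norm_eq_abs, ← hS β hβ]
  exact mul_le_mul_of_nonneg_right (abs_prod_pow_le_norm_pow x β) (norm_nonneg _)

lemma eventually_mul_pow_lt_mul_rpow_norm {E : Type*} [NormedAddCommGroup E] {α C : ℝ}
    (M : ℝ) {m : ℕ} (hC : 0 < C) (hαm : α < m) :
    ∀ᶠ x in 𝓝 (0 : E), x ≠ 0 → M * ‖x‖ ^ m < C * ‖x‖ ^ α := by
  have hlim : Tendsto (fun x : E => M * ‖x‖ ^ ((m : ℝ) - α)) (𝓝 0) (𝓝 0) := by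
    have := ((Real.continuousAt_rpow_const 0 ((m : ℝ) - α) (Or.inr (sub_pos.2 hαm).le)).tendsto.comp
      (tendsto_norm_zero (E := E))).const_mul M
    rwa [Real.zero_rpow (sub_pos.2 hαm).ne', mul_zero] at this
  filter_upwards [hlim.eventually (gt_mem_nhds hC)] with x hx hx0
  have hpos : 0 < ‖x‖ := norm_pos_iff.2 hx0
  calc M * ‖x‖ ^ m = M * ‖x‖ ^ ((m : ℝ) - α) * ‖x‖ ^ α := by
        rw [mul_assoc, ← Real.rpow_add hpos, sub_add_cancel, Real.rpow_natCast]
    _ < C * ‖x‖ ^ α := mul_lt_mul_of_pos_right hx (Real.rpow_pos_of_pos hpos α)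

theorem uniform_isolated_zero_general {n p : ℕ}
    (W : Set (ℝ × EuclideanSpace ℝ (Fin n))) (hWo : IsOpen W)
    (hW0 : ((0:ℝ), (0 : EuclideanSpace ℝ (Fin n))) ∈ W)
    (g : ℝ × EuclideanSpace ℝ (Fin n) → EuclideanSpace ℝ (Fin p))
    (C ε₀ α : ℝ) (hC : 0 < C) (hε₀ : 0 < ε₀)
    (hLoj : ∀ x : EuclideanSpace ℝ (Fin n), ‖x‖ < ε₀ → ((0:ℝ), x) ∈ W →
      C * ‖x‖ ^ α ≤ ‖g (0, x)‖)
    (S : Finset (Fin n → ℕ)) (hS : ∀ β ∈ S, ∑ i, β i = ⌊α⌋₊ + 1)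
    (H : (Fin n → ℕ) → ℝ × EuclideanSpace ℝ (Fin n) → EuclideanSpace ℝ (Fin p))
    (hH : ∀ β ∈ S, AnalyticOnNhd ℝ (H β) W)
    (hdiff : ∀ (t : ℝ) (x : EuclideanSpace ℝ (Fin n)), (t, x) ∈ W → ((0:ℝ), x) ∈ W →
      g (t, x) - g (0, x) = ∑ β ∈ S, (∏ i, x i ^ β i) • H β (t, x)) :
    ∃ δ > (0:ℝ), ∃ ε > (0:ℝ), ∀ (t : ℝ) (x : EuclideanSpace ℝ (Fin n)),
      |t| < δ → ‖x‖ < ε → g (t, x) = 0 → x = 0 := by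
  set M := ∑ β ∈ S, ‖H β (0, 0)‖ + 1
  have hWnhds : ∀ᶠ z in 𝓝 ((0 : ℝ), (0 : EuclideanSpace ℝ (Fin n))), z ∈ W := hWo.mem_nhds hW0
  have hHbound : ∀ᶠ z in 𝓝 ((0 : ℝ), (0 : EuclideanSpace ℝ (Fin n))), ∑ β ∈ S, ‖H β z‖ < M :=
    (tendsto_finsetSum S fun β hβ => (hH β hβ _ hW0).continuousAt.norm).eventually
      (gt_mem_nhds (lt_add_one _))
  have hsnd : Tendsto (fun z : ℝ × EuclideanSpace ℝ (Fin n) => ((0 : ℝ), z.2)) (𝓝 (0, 0))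
      (𝓝 (0, 0)) := (continuous_const.prodMk continuous_snd).tendsto' _ _ rfl
  have hgrowth := eventually_mul_pow_lt_mul_rpow_norm (E := EuclideanSpace ℝ (Fin n)) M hC
    (m := ⌊α⌋₊ + 1) (by exact_mod_cast Nat.lt_floor_add_one α)
  have hzero : ∀ᶠ z in 𝓝 ((0 : ℝ), (0 : EuclideanSpace ℝ (Fin n))), g z = 0 → z.2 = 0 := by
    filter_upwards [hWnhds, hsnd.eventually hWnhds, hHbound,
      (continuous_snd.tendsto _).eventually (eventually_norm_sub_lt 0 hε₀),
      (continuous_snd.tendsto _).eventually hgrowth] with ⟨t, x⟩ htx h0x hM hxε₀ hxgrowth hgz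
    by_contra hx
    have hdecomp := hdiff t x htx h0x
    rw [hgz, zero_sub] at hdecomp
    have hupper : ‖g (0, x)‖ ≤ M * ‖x‖ ^ (⌊α⌋₊ + 1) := by
      rw [← norm_neg, hdecomp, mul_comm]
      exact (norm_sum_monomial_smul_le x hS _).trans
        (mul_le_mul_of_nonneg_left hM.le (by positivity))
    have hlower := hLoj x (by simpa using hxε₀) h0x
    exact (hxgrowth hx).not_ge (hlower.trans hupper)
  obtain ⟨ε, hε, hball⟩ := Metric.eventually_nhds_iff.mp hzero
  exact ⟨ε, hε, ε, hε, fun t x ht hx => hball (by simpa [Prod.dist_eq] using max_lt ht hx)⟩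

/-- Let `g` be real analytic on a neighborhood `W` of `0` in `ℝ × ℝⁿ`,
with `g (t, 0) = 0`, and suppose `‖g (0, x)‖ ≥ C ‖x‖ ^ α` near `0` for some
`C, ε₀, α > 0`.  If, with `m = ⌊α⌋ + 1`, the difference `g (t, x) - g (0, x)` can be
written as `∑_{|β| = m} x ^ β • H_β (t, x)` for finitely many real analytic maps `H_β`
indexed by multi-indices `β` of total degree `m`, then there exist `δ, ε > 0` such that
for `|t| < δ` and `‖x‖ < ε`, `g (t, x) = 0` implies `x = 0`. -/
theorem uniform_isolated_zero {n p : ℕ}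
    (W : Set (ℝ × EuclideanSpace ℝ (Fin n))) (hWo : IsOpen W)
    (hW0 : ((0:ℝ), (0 : EuclideanSpace ℝ (Fin n))) ∈ W)
    (g : ℝ × EuclideanSpace ℝ (Fin n) → EuclideanSpace ℝ (Fin p))
    (hg : AnalyticOnNhd ℝ g W)
    (hg0 : ∀ t : ℝ, (t, (0 : EuclideanSpace ℝ (Fin n))) ∈ W → g (t, 0) = 0)
    (C ε₀ α : ℝ) (hC : 0 < C) (hε₀ : 0 < ε₀) (hα : 0 < α)
    (hLoj : ∀ x : EuclideanSpace ℝ (Fin n), ‖x‖ < ε₀ → ((0:ℝ), x) ∈ W →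
      C * ‖x‖ ^ α ≤ ‖g (0, x)‖)
    (S : Finset (Fin n → ℕ)) (hS : ∀ β ∈ S, ∑ i, β i = ⌊α⌋₊ + 1)
    (H : (Fin n → ℕ) → ℝ × EuclideanSpace ℝ (Fin n) → EuclideanSpace ℝ (Fin p))
    (hH : ∀ β ∈ S, AnalyticOnNhd ℝ (H β) W)
    (hdiff : ∀ (t : ℝ) (x : EuclideanSpace ℝ (Fin n)), (t, x) ∈ W → ((0:ℝ), x) ∈ W →
      g (t, x) - g (0, x) = ∑ β ∈ S, (∏ i, x i ^ β i) • H β (t, x)) :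
    ∃ δ > (0:ℝ), ∃ ε > (0:ℝ), ∀ (t : ℝ) (x : EuclideanSpace ℝ (Fin n)),
      |t| < δ → ‖x‖ < ε → g (t, x) = 0 → x = 0 :=
  uniform_isolated_zero_general W hWo hW0 g C ε₀ α hC hε₀ hLoj S hS H hH hdiff
end

section
/- Let F(t,x) = (t, f_t(x)) be a real analytic family defined on a neighborhood of 0 in ℝ × ℝⁿ with values in ℝ × ℝᵖ, n ≤ p, with f_t(0) = 0 for all t, and suppose f₀ has isolated singularity at 0. Let A₀ be a real analytic matrix-valued map with f₀(x') − f₀(x) = A₀(x,x')·(x'−x), and suppose there exist C > 0, ε₁ > 0 and α > 0 such that ‖Δ̃f₀(x,x')‖ ≥ C‖(x,x')‖^α for all ‖(x,x')‖ < ε₁. Let k ≥ ⌊α⌋ + 2 and suppose that each component of (t,x) ↦ f_t(x) − f₀(x) can be written as Σ_{|β| = k} x^β H_β(t,x) with H_β real analytic (i.e., f_t − f₀ lies in the k-th power of the ideal generated by x₁,…,xₙ, with analytic coefficients in (t,x)). Then the family has uniform isolated singularity: there exist δ > 0 and ε > 0 such that for every |t| < δ, the map f_t is injective on the ball {‖x‖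 < ε} and its derivative Df_t(x) is injective for every x with 0 < ‖x‖ < ε. -/
open Metric Set

/-- The sum of the absolute values of the `n × n` minors of a `p × n` real matrix
(one minor for each `n`-element subset of rows).  It is comparable (up to positive
constants) with the norm of the vector of all `n × n` minors `(D₁, …, D_r)`. -/
noncomputable def minorAbsSum (n p : ℕ) (M : Matrix (Fin p) (Fin n) ℝ) : ℝ :=
  ∑ s ∈ (Finset.powersetCard n (Finset.univ : Finset (Fin p))).attach,
    |(M.submatrix
        (fun i => ((s.1.orderIsoOfFin ((Finset.mem_powersetCard.mp s.2).2)) i : Fin p))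
        id).det|

/-!
Write `f (t, ·) = f₀ + gₜ`. Since `gₜ` lies in the `k`-th power of the ideal `(x₁, …, xₙ)` with
coefficients analytic in `(t, x)`, on a fixed compact neighbourhood of `0` it is Lipschitz on the
ball of radius `R` with constant `O(R ^ (k - 1))`, uniformly in `t`. If `f (t, x) = f (t, x')` with
`x ≠ x'`, the Hadamard relation gives `A₀ x x' (x' - x) = -(gₜ x' - gₜ x)`, so `‖f₀ x' - f₀ x‖`
and, by Cramer's rule, all `n × n` minors of `A₀ x x'` are `O(R ^ (k - 1))` for `R = ‖(x, x')‖`.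
Likewise a kernel vector of `Df_t x = A₀ x x + Dgₜ x` makes the minors of `A₀ x x` be
`O(‖x‖ ^ (k - 1))`. As `k - 1 > α`, both contradict the Łojasiewicz inequality once `R` is below a
threshold that does not depend on `t`.
-/
open Filter Topology Finset Matrix Asymptotics
open scoped Nat

theorem Matrix.abs_det_le_factorial_mul_prod {ι : Type*} [Fintype ι] [DecidableEq ι]
    (A : Matrix ι ι ℝ) {b : ι → ℝ} (h : ∀ i j, |A i j| ≤ b j) :
    |A.det| ≤ (Fintype.card ι)! * ∏ j, b j := by
  rw [det_apply]
  calc _ ≤ ∑ σ : Equiv.Perm ι, |Equiv.Perm.sign σ • ∏ i, A (σ i) i| := abs_sum_le_sum_abs _ _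
    _ ≤ ∑ _σ : Equiv.Perm ι, ∏ j, b j := by
        gcongr with σ
        rw [Units.smul_def, zsmul_eq_mul, abs_mul, ← Int.cast_abs, Equiv.Perm.sign_abs,
          Int.cast_one, one_mul, abs_prod]
        exact prod_le_prod (fun _ _ => abs_nonneg _) fun i _ => h _ _
    _ = _ := by simp [Fintype.card_perm]

theorem Matrix.abs_apply_mul_abs_det_le {ι : Type*} [Fintype ι] [DecidableEq ι]
    (N : Matrix ι ι ℝ) (u : ι → ℝ) (j : ι) {B c : ℝ} (hB : ∀ i j, |N i j| ≤ B)
    (hc : ∀ i, |(N *ᵥ u) i| ≤ c) :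
    |u j| * |N.det| ≤ (Fintype.card ι)! * (B ^ (Fintype.card ι - 1) * c) := by
  have hcol : (fun k => ∑ i, u i • N k i) = N *ᵥ u := by
    ext k; simp [mulVec, dotProduct, mul_comm]
  rw [← abs_mul, ← smul_eq_mul, ← det_updateCol_sum, hcol]
  convert (N.updateCol j (N *ᵥ u)).abs_det_le_factorial_mul_prod
    (b := Function.update (fun _ => B) j c) fun i l => ?_ using 2
  · rw [prod_update_of_mem (mem_univ j), prod_const, card_sdiff_of_subset (by simp), card_univ,
      Finset.card_singleton, mul_comm]
  · rcases eq_or_ne l j with rfl | hl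
    · simpa using hc i
    · simpa [hl] using hB i l

theorem EuclideanSpace.exists_norm_le_sqrt_card_mul_abs {ι : Type*} [Fintype ι] [Nonempty ι]
    (v : EuclideanSpace ℝ ι) : ∃ j, ‖v‖ ≤ √(Fintype.card ι) * |v j| := by
  obtain ⟨j, hj⟩ := Finite.exists_max fun i => |v i|
  refine ⟨j, ?_⟩
  rw [EuclideanSpace.norm_eq, ← Real.sqrt_sq (abs_nonneg (v j)), ← Real.sqrt_mul (by positivity)]
  gcongr
  calc ∑ i, ‖v i‖ ^ 2 ≤ ∑ _i : ι, |v j| ^ 2 := by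
        gcongr with i; rw [Real.norm_eq_abs]; exact hj i
    _ = _ := by simp

theorem norm_mul_minorAbsSum_le {n p : ℕ} (M : Matrix (Fin p) (Fin n) ℝ)
    (v : EuclideanSpace ℝ (Fin n)) {B c : ℝ} (hB : ∀ i j, |M i j| ≤ B)
    (hc : ∀ i, |(M *ᵥ v) i| ≤ c) :
    ‖v‖ * minorAbsSum n p M ≤ p.choose n * √n * n ! * B ^ (n - 1) * c := by
  rcases Nat.eq_zero_or_pos n with rfl | hn
  · simp [Subsingleton.elim v 0]
  have : Nonempty (Fin n) := ⟨⟨0, hn⟩⟩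
  obtain ⟨j, hj⟩ := v.exists_norm_le_sqrt_card_mul_abs
  rw [Fintype.card_fin] at hj
  rw [minorAbsSum, mul_sum]
  calc _ ≤ ∑ _s ∈ (powersetCard n (univ : Finset (Fin p))).attach,
        √n * (n ! * (B ^ (n - 1) * c)) := by
        refine sum_le_sum fun s _ => ?_
        set N := M.submatrix
          (fun i => ((s.1.orderIsoOfFin ((mem_powersetCard.mp s.2).2)) i : Fin p)) id
        have hN := N.abs_apply_mul_abs_det_le v j (fun i l => hB _ _) fun i => by
          simpa [N, mulVec, dotProduct] using hc _
        rw [Fintype.card_fin] at hN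
        calc ‖v‖ * |N.det| ≤ √n * |v j| * |N.det| := by gcongr
          _ ≤ _ := by rw [mul_assoc]; gcongr
    _ = _ := by simp [card_powersetCard]; ring

theorem abs_prod_pow_le {ι : Type*} (s : Finset ι) (β : ι → ℕ) {x : ι → ℝ} {R : ℝ}
    (hx : ∀ i, |x i| ≤ R) : |∏ i ∈ s, x i ^ β i| ≤ R ^ ∑ i ∈ s, β i := by
  rw [abs_prod, ← prod_pow_eq_pow_sum]
  gcongr with i
  rw [abs_pow]
  exact pow_le_pow_left₀ (abs_nonneg _) (hx i) _

theorem abs_prod_pow_sub_prod_pow_le {ι : Type*} [DecidableEq ι] (s : Finset ι) (β : ι → ℕ)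
    {x x' : ι → ℝ} {R d : ℝ} (hx : ∀ i, |x i| ≤ R) (hx' : ∀ i, |x' i| ≤ R)
    (hd : ∀ i, |x' i - x i| ≤ d) :
    |∏ i ∈ s, x' i ^ β i - ∏ i ∈ s, x i ^ β i|
      ≤ (∑ i ∈ s, β i) * R ^ (∑ i ∈ s, β i - 1) * d := by
  induction s using Finset.induction_on with
  | empty => simp
  | insert i s hi ih =>
    have hR : 0 ≤ R := (abs_nonneg _).trans (hx i)
    have hd0 : 0 ≤ d := (abs_nonneg _).trans (hd i)
    have merge : ∀ a b : ℕ, (a : ℝ) * R ^ (a - 1) * R ^ b = a * R ^ (a + b - 1) := by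
      rintro (_ | a) b
      · simp
      · rw [mul_assoc, ← pow_add]; congr 3; omega
    rw [prod_insert hi, prod_insert hi, sum_insert hi]
    set e := ∑ j ∈ s, β j
    calc _ = |(x' i ^ β i - x i ^ β i) * ∏ j ∈ s, x' j ^ β j
            + x i ^ β i * (∏ j ∈ s, x' j ^ β j - ∏ j ∈ s, x j ^ β j)| := by ring_nf
      _ ≤ |x' i - x i| * β i * max |x' i| |x i| ^ (β i - 1) * R ^ e
            + R ^ β i * (e * R ^ (e - 1) * d) := by
          refine (abs_add_le _ _).trans ?_
          rw [abs_mul, abs_mul]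
          gcongr
          · exact abs_pow_sub_pow_le ..
          · exact abs_prod_pow_le s β hx'
          · rw [abs_pow]; exact pow_le_pow_left₀ (abs_nonneg _) (hx i) _
      _ ≤ d * β i * R ^ (β i - 1) * R ^ e + R ^ β i * (e * R ^ (e - 1) * d) := by
          gcongr
          · exact hd i
          · exact max_le (hx' i) (hx i)
      _ = (β i * R ^ (β i - 1) * R ^ e + e * R ^ (e - 1) * R ^ β i) * d := by ring
      _ = _ := by rw [merge, merge, add_comm e]; push_cast; ring

theorem norm_monomial_smul_sub_le {n k : ℕ} {F : Type*} [NormedAddCommGroup F]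
    [NormedSpace ℝ F] {β : Fin n → ℕ} (hβ : ∑ i, β i = k) (hk : k ≠ 0)
    {x x' : EuclideanSpace ℝ (Fin n)} {h h' : F} {M L ρ : ℝ} (hρ : ‖(x, x')‖ ≤ ρ)
    (hh' : ‖h'‖ ≤ M) (hh : ‖h' - h‖ ≤ L * ‖x' - x‖) :
    ‖(∏ i, x' i ^ β i) • h' - (∏ i, x i ^ β i) • h‖
      ≤ (k * M + ρ * L) * ‖(x, x')‖ ^ (k - 1) * ‖x' - x‖ := by
  set R := ‖(x, x')‖
  have hx : ∀ i, |x i| ≤ R := fun i => (PiLp.norm_apply_le x i).trans (norm_fst_le (x, x'))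
  have hx' : ∀ i, |x' i| ≤ R := fun i => (PiLp.norm_apply_le x' i).trans (norm_snd_le (x, x'))
  have hmono : |∏ i, x' i ^ β i - ∏ i, x i ^ β i| ≤ k * R ^ (k - 1) * ‖x' - x‖ := by
    simpa [hβ] using abs_prod_pow_sub_prod_pow_le univ β hx hx' fun i =>
      PiLp.norm_apply_le (x' - x) i
  have hprod : |∏ i, x i ^ β i| ≤ R ^ (k - 1) * ρ := by
    calc _ ≤ R ^ k := by simpa [hβ] using abs_prod_pow_le univ β hx
      _ = R ^ (k - 1) * R := by rw [← pow_succ, Nat.sub_add_cancel (Nat.one_le_iff_ne_zero.2 hk)]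
      _ ≤ R ^ (k - 1) * ρ := by gcongr
  rw [show (∏ i, x' i ^ β i) • h' - (∏ i, x i ^ β i) • h
      = (∏ i, x' i ^ β i - ∏ i, x i ^ β i) • h' + (∏ i, x i ^ β i) • (h' - h) by module]
  calc _ ≤ |∏ i, x' i ^ β i - ∏ i, x i ^ β i| * ‖h'‖ + |∏ i, x i ^ β i| * ‖h' - h‖ := by
        refine (norm_add_le _ _).trans ?_
        rw [norm_smul, norm_smul, Real.norm_eq_abs, Real.norm_eq_abs]
    _ ≤ k * R ^ (k - 1) * ‖x' - x‖ * M + R ^ (k - 1) * ρ * (L * ‖x' - x‖) := by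
        have : 0 ≤ ρ := (norm_nonneg _).trans hρ
        gcongr
    _ = _ := by ring

theorem exists_norm_sum_monomial_smul_sub_le {n k : ℕ} {P F : Type*} [NormedAddCommGroup P]
    [NormedSpace ℝ P] [ProperSpace P] [NormedAddCommGroup F] [NormedSpace ℝ F]
    {S : Finset (Fin n → ℕ)} (hS : ∀ β ∈ S, ∑ i, β i = k) (hk : k ≠ 0)
    {H : (Fin n → ℕ) → P × EuclideanSpace ℝ (Fin n) → F} {r : ℝ} (hr : 0 ≤ r)
    (hH : ∀ β ∈ S, ContDiffOn ℝ 1 (H β) (closedBall 0 r)) :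
    ∃ K, 0 ≤ K ∧ ∀ t x x', (t, x) ∈ closedBall 0 r → (t, x') ∈ closedBall 0 r →
      ‖∑ β ∈ S, (∏ i, x' i ^ β i) • H β (t, x') - ∑ β ∈ S, (∏ i, x i ^ β i) • H β (t, x)‖
        ≤ K * ‖(x, x')‖ ^ (k - 1) * ‖x' - x‖ := by
  set Ψ : P × EuclideanSpace ℝ (Fin n) → (S → F) := fun z β => H β z
  have hΨ : ContDiffOn ℝ 1 Ψ (closedBall 0 r) := contDiffOn_pi.2 fun β => hH β β.2
  obtain ⟨M, hM⟩ := (isCompact_closedBall 0 r).exists_bound_of_continuousOn hΨ.continuousOn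
  obtain ⟨L, hL⟩ := hΨ.exists_lipschitzOnWith one_ne_zero (convex_closedBall 0 r)
    (isCompact_closedBall 0 r)
  have hM0 : 0 ≤ M := (norm_nonneg _).trans (hM 0 (mem_closedBall_self hr))
  refine ⟨∑ _β ∈ S, (k * M + r * L), by positivity, fun t x x' hx hx' => ?_⟩
  rw [← sum_sub_distrib, sum_mul, sum_mul]
  refine (norm_sum_le _ _).trans (sum_le_sum fun β hβ => ?_)
  refine norm_monomial_smul_sub_le (hS β hβ) hk ?_
    ((norm_le_pi_norm (Ψ _) ⟨β, hβ⟩).trans (hM _ hx')) ?_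
  · rw [mem_closedBall_zero_iff, norm_prod_le_iff] at hx hx'
    exact norm_prod_le_iff.2 ⟨hx.2, hx'.2⟩
  · calc ‖H β (t, x') - H β (t, x)‖ ≤ ‖Ψ (t, x') - Ψ (t, x)‖ :=
          norm_le_pi_norm (Ψ (t, x') - Ψ (t, x)) ⟨β, hβ⟩
      _ ≤ L * ‖(t, x') - (t, x)‖ := by
          rw [← dist_eq_norm, ← dist_eq_norm]; exact hL.dist_le_mul _ hx' _ hx
      _ = L * ‖x' - x‖ := by simp [Prod.norm_def]

theorem norm_fderiv_le_of_eventually_norm_sub_le {E F : Type*} [NormedAddCommGroup E]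
    [NormedSpace ℝ E] [NormedAddCommGroup F] [NormedSpace ℝ F] {g : E → F} {ψ : E → ℝ} {x : E}
    (hg : DifferentiableAt ℝ g x) (hψ : ContinuousAt ψ x) (hψx : 0 ≤ ψ x)
    (h : ∀ᶠ y in 𝓝 x, ‖g y - g x‖ ≤ ψ y * ‖y - x‖) : ‖fderiv ℝ g x‖ ≤ ψ x := by
  refine le_of_forall_gt_imp_ge_of_dense fun L hL => hg.hasFDerivAt.le_of_lip' (hψx.trans hL.le) ?_
  filter_upwards [h, hψ.eventually (gt_mem_nhds hL)] with y hy hyL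
  exact hy.trans (by gcongr)

theorem hasFDerivAt_of_sub_eq_sum_mul {E ι : Type*} [NormedAddCommGroup E] [NormedSpace ℝ E]
    [Fintype ι] {ψ : E → ℝ} {a : ι → E → ℝ} {ℓ : ι → E →L[ℝ] ℝ} {x : E}
    (ha : ∀ j, ContinuousAt (a j) x) (h : ∀ᶠ y in 𝓝 x, ψ y - ψ x = ∑ j, a j y * ℓ j (y - x)) :
    HasFDerivAt ψ (∑ j, a j x • ℓ j) x := by
  have hj : ∀ j, (fun y => (a j y - a j x) * ℓ j (y - x)) =o[𝓝 x] fun y => y - x := fun j => by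
    have h1 : (fun y => a j y - a j x) =o[𝓝 x] fun _ => (1 : ℝ) :=
      (isLittleO_one_iff ℝ).2 (by simpa using (ha j).tendsto.sub_const (a j x))
    simpa using (h1.mul_isBigO ((ℓ j).isBigO_sub (𝓝 x) x).norm_right).norm_right
  refine .of_isLittleO ((IsLittleO.sum (s := univ) fun j _ => hj j).congr' ?_ EventuallyEq.rfl)
  filter_upwards [h] with y hy
  simp [hy, sub_mul, sum_sub_distrib]

theorem fderiv_apply_eq_mulVec_of_sub_eq_mulVec {n p : ℕ}
    {f : EuclideanSpace ℝ (Fin n) → EuclideanSpace ℝ (Fin p)}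
    {A : EuclideanSpace ℝ (Fin n) → Matrix (Fin p) (Fin n) ℝ} {x : EuclideanSpace ℝ (Fin n)}
    (hf : DifferentiableAt ℝ f x) (hA : ∀ i j, ContinuousAt (fun y => A y i j) x)
    (h : ∀ᶠ y in 𝓝 x, ∀ i, f y i - f x i = (A y *ᵥ (y - x)) i)
    (v : EuclideanSpace ℝ (Fin n)) (i : Fin p) : fderiv ℝ f x v i = (A x *ᵥ v) i := by
  have hi : HasFDerivAt (fun y => f y i) (∑ j, A x i j • EuclideanSpace.proj j) x :=
    hasFDerivAt_of_sub_eq_sum_mul (hA i) <| h.mono fun y hy => by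
      simpa [mulVec, dotProduct] using hy i
  have hi' : HasFDerivAt (fun y => f y i) ((EuclideanSpace.proj i).comp (fderiv ℝ f x)) x :=
    (EuclideanSpace.proj (𝕜 := ℝ) i).hasFDerivAt.comp x hf.hasFDerivAt
  have := congrArg (· v) (hi'.unique hi)
  simpa [mulVec, dotProduct] using this

theorem exists_forall_mul_pow_lt_mul_rpow {α C : ℝ} {m : ℕ} (hαm : α < m) (hC : 0 < C) (K : ℝ)
    {ρ : ℝ} (hρ : 0 < ρ) :
    ∃ ε, 0 < ε ∧ ε ≤ ρ ∧ ∀ R, 0 < R → R < ε → K * R ^ m < C * R ^ α := by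
  have hcont : ContinuousAt (fun R : ℝ => K * R ^ ((m : ℝ) - α)) 0 :=
    continuousAt_const.mul (Real.continuousAt_rpow_const 0 _ (Or.inr (by linarith)))
  obtain ⟨ε, hε, hεC⟩ := Metric.continuousAt_iff.1 hcont C hC
  refine ⟨min ε ρ, lt_min hε hρ, min_le_right _ _, fun R hR hRε => ?_⟩
  have hsmall : K * R ^ ((m : ℝ) - α) < C := by
    have := hεC (x := R) (by simpa [abs_of_pos hR] using hRε.trans_le (min_le_left _ _))
    simpa [Real.zero_rpow (by linarith : (m : ℝ) - α ≠ 0)] using (le_abs_self _).trans_lt this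
  calc K * R ^ m = K * R ^ ((m : ℝ) - α) * R ^ α := by
        rw [mul_assoc, ← Real.rpow_add hR, sub_add_cancel, Real.rpow_natCast]
    _ < C * R ^ α := by gcongr

theorem Matrix.exists_forall_abs_apply_le {X ι κ : Type*} [TopologicalSpace X] [Finite ι] [Finite κ]
    {K : Set X} (hK : IsCompact K) {A : X → Matrix ι κ ℝ}
    (hA : ∀ i j, ContinuousOn (fun q => A q i j) K) : ∃ B, ∀ q ∈ K, ∀ i j, |A q i j| ≤ B := by
  choose B hB using fun i j => hK.exists_bound_of_continuousOn (hA i j)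
  obtain ⟨B', hB'⟩ := Finite.exists_le fun ij : ι × κ => B ij.1 ij.2
  exact ⟨B', fun q hq i j => (hB i j q hq).trans (hB' (i, j))⟩

section Lojasiewicz

variable {n p m : ℕ} {f₀ f₁ : EuclideanSpace ℝ (Fin n) → EuclideanSpace ℝ (Fin p)}
  {A : EuclideanSpace ℝ (Fin n) → EuclideanSpace ℝ (Fin n) → Matrix (Fin p) (Fin n) ℝ}
  {ε C α D K : ℝ}

theorem injOn_of_lojasiewicz
    (hA : ∀ x ∈ ball 0 ε, ∀ x' ∈ ball 0 ε, ∀ i, f₀ x' i - f₀ x i = (A x x' *ᵥ (x' - x)) i)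
    (hminor : ∀ x ∈ ball 0 ε, ∀ x' ∈ ball 0 ε, ∀ (v : EuclideanSpace ℝ (Fin n)) c,
      (∀ i, |(A x x' *ᵥ v) i| ≤ c) → ‖v‖ * minorAbsSum n p (A x x') ≤ D * c)
    (hLoj : ∀ x ∈ ball 0 ε, ∀ x' ∈ ball 0 ε,
      C * ‖(x, x')‖ ^ α ≤ ‖f₀ x' - f₀ x‖ + minorAbsSum n p (A x x'))
    (hg : ∀ x ∈ ball 0 ε, ∀ x' ∈ ball 0 ε,
      ‖(f₁ x' - f₀ x') - (f₁ x - f₀ x)‖ ≤ K * ‖(x, x')‖ ^ m * ‖x' - x‖)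
    (hK : 0 ≤ K) (hε : ∀ R, 0 < R → R < ε → (2 * R + D) * K * R ^ m < C * R ^ α) :
    InjOn f₁ (ball 0 ε) := by
  intro x hx x' hx' heq
  by_contra hne
  set R := ‖(x, x')‖
  have hR : 0 < R := norm_pos_iff.2 fun h => hne <| by
    obtain ⟨h₁, h₂⟩ := Prod.ext_iff.1 h
    exact h₁.trans h₂.symm
  have hRε : R < ε := max_lt (mem_ball_zero_iff.1 hx) (mem_ball_zero_iff.1 hx')
  have hv : 0 < ‖x' - x‖ := norm_pos_iff.2 (sub_ne_zero.2 (Ne.symm hne))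
  have hΔ : ‖f₀ x' - f₀ x‖ ≤ K * R ^ m * ‖x' - x‖ := by
    have : f₀ x' - f₀ x = -((f₁ x' - f₀ x') - (f₁ x - f₀ x)) := by rw [heq]; abel
    rw [this, norm_neg]
    exact hg x hx x' hx'
  have hminor' : minorAbsSum n p (A x x') ≤ D * (K * R ^ m) := by
    refine le_of_mul_le_mul_left ?_ hv
    calc ‖x' - x‖ * minorAbsSum n p (A x x') ≤ D * (K * R ^ m * ‖x' - x‖) :=
          hminor x hx x' hx' _ _ fun i => by
            rw [WithLp.ofLp_sub, ← hA x hx x' hx' i]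
            simpa using (PiLp.norm_apply_le (f₀ x' - f₀ x) i).trans hΔ
      _ = _ := by ring
  have hvR : ‖x' - x‖ ≤ 2 * R :=
    (norm_sub_le _ _).trans (by linarith [norm_fst_le (x, x'), norm_snd_le (x, x')])
  have hKR : 0 ≤ K * R ^ m := by positivity
  refine (hε R hR hRε).not_ge ?_
  calc (2 * R + D) * K * R ^ m = K * R ^ m * (2 * R) + D * (K * R ^ m) := by ring
    _ ≥ ‖f₀ x' - f₀ x‖ + minorAbsSum n p (A x x') := by
        gcongr
        exact hΔ.trans (by gcongr)
    _ ≥ C * R ^ α := hLoj x hx x' hx'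

theorem injective_fderiv_of_lojasiewicz
    (hd₀ : ∀ x ∈ ball 0 ε, DifferentiableAt ℝ f₀ x) (hd₁ : ∀ x ∈ ball 0 ε, DifferentiableAt ℝ f₁ x)
    (hA : ∀ x ∈ ball 0 ε, ∀ x' ∈ ball 0 ε, ∀ i, f₀ x' i - f₀ x i = (A x x' *ᵥ (x' - x)) i)
    (hAc : ∀ x ∈ ball 0 ε, ∀ i j, ContinuousAt (fun y => A x y i j) x)
    (hminor : ∀ x ∈ ball 0 ε, ∀ x' ∈ ball 0 ε, ∀ (v : EuclideanSpace ℝ (Fin n)) c,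
      (∀ i, |(A x x' *ᵥ v) i| ≤ c) → ‖v‖ * minorAbsSum n p (A x x') ≤ D * c)
    (hLoj : ∀ x ∈ ball 0 ε, ∀ x' ∈ ball 0 ε,
      C * ‖(x, x')‖ ^ α ≤ ‖f₀ x' - f₀ x‖ + minorAbsSum n p (A x x'))
    (hg : ∀ x ∈ ball 0 ε, ∀ x' ∈ ball 0 ε,
      ‖(f₁ x' - f₀ x') - (f₁ x - f₀ x)‖ ≤ K * ‖(x, x')‖ ^ m * ‖x' - x‖)
    (hK : 0 ≤ K) (hε : ∀ R, 0 < R → R < ε → (2 * R + D) * K * R ^ m < C * R ^ α)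
    {x : EuclideanSpace ℝ (Fin n)} (hx0 : 0 < ‖x‖) (hxε : ‖x‖ < ε) :
    Function.Injective (fderiv ℝ f₁ x) := by
  have hx : x ∈ ball 0 ε := mem_ball_zero_iff.2 hxε
  have hnhds : ball 0 ε ∈ 𝓝 x := isOpen_ball.mem_nhds hx
  have hDf₀ := fderiv_apply_eq_mulVec_of_sub_eq_mulVec (hd₀ x hx) (hAc x hx)
    (eventually_of_mem hnhds (hA x hx))
  have hDg : ‖fderiv ℝ (f₁ - f₀) x‖ ≤ K * ‖x‖ ^ m := by
    simpa [Prod.norm_def] using norm_fderiv_le_of_eventually_norm_sub_le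
      ((hd₁ x hx).sub (hd₀ x hx)) (ψ := fun y => K * ‖(x, y)‖ ^ m) (by fun_prop) (by positivity)
      (eventually_of_mem hnhds (hg x hx))
  refine (injective_iff_map_eq_zero _).2 fun v hv => by_contra fun hv0 => ?_
  have hc : ∀ i, |(A x x *ᵥ v) i| ≤ K * ‖x‖ ^ m * ‖v‖ := fun i => by
    rw [← hDf₀]
    calc |fderiv ℝ f₀ x v i| ≤ ‖fderiv ℝ f₀ x v‖ := by
          simpa using PiLp.norm_apply_le (fderiv ℝ f₀ x v) i
      _ = ‖fderiv ℝ (f₁ - f₀) x v‖ := by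
          rw [fderiv_sub (hd₁ x hx) (hd₀ x hx), _root_.sub_apply, hv, zero_sub, norm_neg]
      _ ≤ ‖fderiv ℝ (f₁ - f₀) x‖ * ‖v‖ := ContinuousLinearMap.le_opNorm _ _
      _ ≤ _ := by gcongr
  have hminor' : minorAbsSum n p (A x x) ≤ D * (K * ‖x‖ ^ m) := by
    refine le_of_mul_le_mul_left ?_ (norm_pos_iff.2 hv0)
    calc ‖v‖ * minorAbsSum n p (A x x) ≤ D * (K * ‖x‖ ^ m * ‖v‖) := hminor x hx x hx v _ hc
      _ = _ := by ring
  have hLx : C * ‖x‖ ^ α ≤ minorAbsSum n p (A x x) := by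
    simpa [Prod.norm_def] using hLoj x hx x hx
  have : 0 ≤ 2 * ‖x‖ * K * ‖x‖ ^ m := by positivity
  linarith [hε ‖x‖ hx0 hxε]

end Lojasiewicz

theorem uniform_isolated_singularity_general {n p : ℕ}
    (W : Set (ℝ × EuclideanSpace ℝ (Fin n))) (hWo : IsOpen W)
    (hW0 : ((0:ℝ), (0 : EuclideanSpace ℝ (Fin n))) ∈ W)
    (f : ℝ × EuclideanSpace ℝ (Fin n) → EuclideanSpace ℝ (Fin p))
    (hf : AnalyticOnNhd ℝ f W)
    -- `f₀` has isolated singularity at `0`: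
    (U : Set (EuclideanSpace ℝ (Fin n))) (hU : U ∈ nhds 0)
    -- Hadamard matrix for `f₀`:
    (A₀ : EuclideanSpace ℝ (Fin n) → EuclideanSpace ℝ (Fin n) → Matrix (Fin p) (Fin n) ℝ)
    (hA₀ : ∀ i j, AnalyticOnNhd ℝ
      (fun q : EuclideanSpace ℝ (Fin n) × EuclideanSpace ℝ (Fin n) => A₀ q.1 q.2 i j)
      (U ×ˢ U))
    (hA₀f : ∀ x ∈ U, ∀ x' ∈ U, ∀ i,
      f (0, x') i - f (0, x) i = (A₀ x x').mulVec (x' - x) i)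
    -- Lojasiewicz inequality for `Δ̃f₀`:
    (C ε₁ α : ℝ) (hC : 0 < C) (hε₁ : 0 < ε₁)
    (hLoj : ∀ x ∈ U, ∀ x' ∈ U, ‖(x, x')‖ < ε₁ →
      C * ‖(x, x')‖ ^ α ≤ ‖f (0, x') - f (0, x)‖ + minorAbsSum n p (A₀ x x'))
    -- `f_t - f₀` lies in the `k`-th power of the ideal `(x₁, …, xₙ)`:
    (k : ℕ) (hk : ⌊α⌋₊ + 2 ≤ k)
    (S : Finset (Fin n → ℕ)) (hS : ∀ β ∈ S, ∑ i, β i = k)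
    (H : (Fin n → ℕ) → ℝ × EuclideanSpace ℝ (Fin n) → EuclideanSpace ℝ (Fin p))
    (hH : ∀ β ∈ S, AnalyticOnNhd ℝ (H β) W)
    (hdiff : ∀ (t : ℝ) (x : EuclideanSpace ℝ (Fin n)), (t, x) ∈ W → ((0:ℝ), x) ∈ W →
      f (t, x) - f (0, x) = ∑ β ∈ S, (∏ i, x i ^ β i) • H β (t, x)) :
    ∃ δ > (0:ℝ), ∃ ε > (0:ℝ), ∀ t : ℝ, |t| < δ →
      Set.InjOn (fun x => f (t, x)) (Metric.ball 0 ε) ∧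
      ∀ x : EuclideanSpace ℝ (Fin n), 0 < ‖x‖ → ‖x‖ < ε →
        Function.Injective (fderiv ℝ (fun y : EuclideanSpace ℝ (Fin n) => f (t, y)) x) := by
  rw [Prod.mk_zero_zero] at hW0
  obtain ⟨r, hr, hrW⟩ := nhds_basis_closedBall.mem_iff.1 <| inter_mem (hWo.mem_nhds hW0)
    (prod_mem_nhds univ_mem (inter_mem hU (ball_mem_nhds 0 hε₁)))
  have hQ : ∀ s x, |s| ≤ r → ‖x‖ ≤ r → (s, x) ∈ closedBall (0 : ℝ × EuclideanSpace ℝ (Fin n)) r :=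
    fun s x hs hx => mem_closedBall_zero_iff.2 (norm_prod_le_iff.2 ⟨hs, hx⟩)
  have h0 : |(0 : ℝ)| ≤ r := by simpa using hr.le
  have hUr : closedBall 0 r ⊆ U ∩ ball 0 ε₁ := fun x hx =>
    (hrW (hQ 0 x h0 (mem_closedBall_zero_iff.1 hx))).2.2
  obtain ⟨K, hK, hG⟩ := exists_norm_sum_monomial_smul_sub_le hS (by omega) hr.le fun β hβ =>
    ((hH β hβ).mono fun z hz => (hrW hz).1).contDiffOn_of_completeSpace
  obtain ⟨B, hB⟩ := Matrix.exists_forall_abs_apply_le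
    ((isCompact_closedBall 0 r).prod (isCompact_closedBall 0 r)) fun i j =>
      (hA₀ i j).continuousOn.mono (prod_mono (fun x hx => (hUr hx).1) fun x hx => (hUr hx).1)
  set D := p.choose n * √n * n ! * B ^ (n - 1)
  have hαk : α < (k - 1 : ℕ) :=
    (Nat.lt_floor_add_one α).trans_le (by exact_mod_cast (by omega : ⌊α⌋₊ + 1 ≤ k - 1))
  obtain ⟨ε, hε, hεr, hpow⟩ := exists_forall_mul_pow_lt_mul_rpow hαk hC ((2 * r + D) * K) hr
  refine ⟨r, hr, ε, hε, fun t ht => ?_⟩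
  have hεr' : ∀ x ∈ ball (0 : EuclideanSpace ℝ (Fin n)) ε, ‖x‖ ≤ r :=
    fun x hx => (mem_ball_zero_iff.1 hx).le.trans hεr
  have hεU : ∀ x ∈ ball (0 : EuclideanSpace ℝ (Fin n)) ε, x ∈ U ∩ ball 0 ε₁ :=
    fun x hx => hUr (mem_closedBall_zero_iff.2 (hεr' x hx))
  have hdiffAt : ∀ s, |s| ≤ r → ∀ x ∈ ball 0 ε, DifferentiableAt ℝ (fun y => f (s, y)) x :=
    fun s hs x hx => ((hf _ (hrW (hQ s x hs (hεr' x hx))).1).comp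
      (analyticAt_const.prod analyticAt_id)).differentiableAt
  have hAc : ∀ x ∈ ball 0 ε, ∀ i j, ContinuousAt (fun y => A₀ x y i j) x := fun x hx i j =>
    ((hA₀ i j (x, x) ⟨(hεU x hx).1, (hεU x hx).1⟩).comp
      (analyticAt_const.prod analyticAt_id)).continuousAt
  have hA : ∀ x ∈ ball 0 ε, ∀ x' ∈ ball 0 ε, ∀ i,
      f (0, x') i - f (0, x) i = (A₀ x x' *ᵥ (x' - x)) i := fun x hx x' hx' =>
    hA₀f x (hεU x hx).1 x' (hεU x' hx').1
  have hminor : ∀ x ∈ ball 0 ε, ∀ x' ∈ ball 0 ε, ∀ (v : EuclideanSpace ℝ (Fin n)) c,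
      (∀ i, |(A₀ x x' *ᵥ v) i| ≤ c) → ‖v‖ * minorAbsSum n p (A₀ x x') ≤ D * c :=
    fun x hx x' hx' v c => norm_mul_minorAbsSum_le _ v
      (hB (x, x') ⟨mem_closedBall_zero_iff.2 (hεr' x hx), mem_closedBall_zero_iff.2 (hεr' x' hx')⟩)
  have hLojε : ∀ x ∈ ball 0 ε, ∀ x' ∈ ball 0 ε,
      C * ‖(x, x')‖ ^ α ≤ ‖f (0, x') - f (0, x)‖ + minorAbsSum n p (A₀ x x') :=
    fun x hx x' hx' => hLoj x (hεU x hx).1 x' (hεU x' hx').1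
      (max_lt (mem_ball_zero_iff.1 (hεU x hx).2) (mem_ball_zero_iff.1 (hεU x' hx').2))
  have hg : ∀ x ∈ ball 0 ε, ∀ x' ∈ ball 0 ε, ‖(f (t, x') - f (0, x')) - (f (t, x) - f (0, x))‖
      ≤ K * ‖(x, x')‖ ^ (k - 1) * ‖x' - x‖ := fun x hx x' hx' => by
    have hQt := fun y hy => hQ t y ht.le (hεr' y hy)
    have hQ0 := fun y hy => hQ 0 y h0 (hεr' y hy)
    rw [hdiff t x' (hrW (hQt x' hx')).1 (hrW (hQ0 x' hx')).1,
      hdiff t x (hrW (hQt x hx)).1 (hrW (hQ0 x hx)).1]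
    exact hG t x x' (hQt x hx) (hQt x' hx')
  have hsmall : ∀ R, 0 < R → R < ε → (2 * R + D) * K * R ^ (k - 1) < C * R ^ α :=
    fun R hR hRε => lt_of_le_of_lt (by gcongr; linarith) (hpow R hR hRε)
  exact ⟨injOn_of_lojasiewicz hA hminor hLojε hg hK hsmall, fun x hx0 hxε =>
    injective_fderiv_of_lojasiewicz (hdiffAt 0 h0) (hdiffAt t ht.le) hA hAc
      hminor hLojε hg hK hsmall hx0 hxε⟩

/-- Uniform isolated singularity: let `F (t, x) = (t, f (t, x))` be a real
analytic family on a neighborhood `W` of `0` in `ℝ × ℝⁿ` with values in `ℝ × ℝᵖ` (`n ≤ p`),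
`f (t, 0) = 0`, such that `f₀ = f (0, ·)` has isolated singularity at `0` (injective and
immersive away from `0` on a neighborhood `U` of `0`).  Let `A₀` be a real analytic
matrix-valued map with `f₀ x' - f₀ x = A₀ (x, x') ⬝ (x' - x)`, satisfying the Lojasiewicz
inequality `‖Δ̃f₀ (x, x')‖ ≥ C ‖(x, x')‖ ^ α` near `0`.  If `k ≥ ⌊α⌋ + 2` and each
component of `f (t, x) - f (0, x)` lies in the `k`-th power of the ideal `(x₁, …, xₙ)`
(i.e. `f (t, x) - f (0, x) = ∑_{|β| = k} x ^ β • H_β (t, x)` with `H_β` analytic), then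
the family has uniform isolated singularity: there are `δ, ε > 0` such that for every
`|t| < δ`, the map `f (t, ·)` is injective on the ball `{‖x‖ < ε}` and its derivative is
injective at every `x` with `0 < ‖x‖ < ε`. -/
theorem uniform_isolated_singularity {n p : ℕ} (hnp : n ≤ p)
    (W : Set (ℝ × EuclideanSpace ℝ (Fin n))) (hWo : IsOpen W)
    (hW0 : ((0:ℝ), (0 : EuclideanSpace ℝ (Fin n))) ∈ W)
    (f : ℝ × EuclideanSpace ℝ (Fin n) → EuclideanSpace ℝ (Fin p))
    (hf : AnalyticOnNhd ℝ f W)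
    (hf0 : ∀ t : ℝ, (t, (0 : EuclideanSpace ℝ (Fin n))) ∈ W → f (t, 0) = 0)
    -- `f₀` has isolated singularity at `0`:
    (U : Set (EuclideanSpace ℝ (Fin n))) (hU : U ∈ nhds 0)
    (hUW : ∀ x ∈ U, ((0:ℝ), x) ∈ W)
    (hinj : Set.InjOn (fun x => f (0, x)) U)
    (himm : ∀ x ∈ U, x ≠ 0 →
      Function.Injective (fderiv ℝ (fun y : EuclideanSpace ℝ (Fin n) => f (0, y)) x))
    -- Hadamard matrix for `f₀`:
    (A₀ : EuclideanSpace ℝ (Fin n) → EuclideanSpace ℝ (Fin n) → Matrix (Fin p) (Fin n) ℝ)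
    (hA₀ : ∀ i j, AnalyticOnNhd ℝ
      (fun q : EuclideanSpace ℝ (Fin n) × EuclideanSpace ℝ (Fin n) => A₀ q.1 q.2 i j)
      (U ×ˢ U))
    (hA₀f : ∀ x ∈ U, ∀ x' ∈ U, ∀ i,
      f (0, x') i - f (0, x) i = (A₀ x x').mulVec (x' - x) i)
    -- Lojasiewicz inequality for `Δ̃f₀`:
    (C ε₁ α : ℝ) (hC : 0 < C) (hε₁ : 0 < ε₁) (hα : 0 < α)
    (hLoj : ∀ x ∈ U, ∀ x' ∈ U, ‖(x, x')‖ < ε₁ →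
      C * ‖(x, x')‖ ^ α ≤ ‖f (0, x') - f (0, x)‖ + minorAbsSum n p (A₀ x x'))
    -- `f_t - f₀` lies in the `k`-th power of the ideal `(x₁, …, xₙ)`:
    (k : ℕ) (hk : ⌊α⌋₊ + 2 ≤ k)
    (S : Finset (Fin n → ℕ)) (hS : ∀ β ∈ S, ∑ i, β i = k)
    (H : (Fin n → ℕ) → ℝ × EuclideanSpace ℝ (Fin n) → EuclideanSpace ℝ (Fin p))
    (hH : ∀ β ∈ S, AnalyticOnNhd ℝ (H β) W)
    (hdiff : ∀ (t : ℝ) (x : EuclideanSpace ℝ (Fin n)), (t, x) ∈ W → ((0:ℝ), x) ∈ W →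
      f (t, x) - f (0, x) = ∑ β ∈ S, (∏ i, x i ^ β i) • H β (t, x)) :
    ∃ δ > (0:ℝ), ∃ ε > (0:ℝ), ∀ t : ℝ, |t| < δ →
      Set.InjOn (fun x => f (t, x)) (Metric.ball 0 ε) ∧
      ∀ x : EuclideanSpace ℝ (Fin n), 0 < ‖x‖ → ‖x‖ < ε →
        Function.Injective (fderiv ℝ (fun y : EuclideanSpace ℝ (Fin n) => f (t, y)) x) :=
  uniform_isolated_singularity_general W hWo hW0 f hf U hU A₀ hA₀ hA₀f C ε₁ α hC hε₁ hLoj k hk S hS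
    H hH hdiff
end

section
/- Let X ⊆ ℝᵖ be a set and x₀ ∈ X. Suppose there exist an open neighborhood U of 0 in ℝⁿ, a real analytic map f : U → ℝᵖ with f(0) = x₀, an open neighborhood V of x₀ in ℝᵖ with f(U) = X ∩ V, and constants c, C > 0 with c‖x − x'‖ ≤ ‖f(x) − f(x')‖ ≤ C‖x − x'‖ for all x, x' ∈ U (f is bi-Lipschitz onto its image). Then there exist open neighborhoods U' ⊆ U of 0 and V' ⊆ V of x₀ such that Df(x) is injective for every x ∈ U' and f restricted to U' is a homeomorphism onto X ∩ V'; in particular, X is a smooth (indeed analytic) n-dimensional submanifold of ℝᵖ near x₀. -/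
open Filter Topology

/-!
Along a ray `x + t • v`, the lower Lipschitz bound `c * ‖y - x‖ ≤ ‖f y - f x‖` passes to the
difference quotients and hence to their limit, giving `c * ‖v‖ ≤ ‖Df(x) v‖`; so `Df(x)` is
injective at every point of `U`. The two-sided bound makes `f` a uniform embedding of `U`, so
`U' = U` and `V' = V` already work.
-/

section FDeriv

variable {E F : Type*} [NormedAddCommGroup E] [NormedSpace ℝ E] [NormedAddCommGroup F]
  [NormedSpace ℝ F] {f : E → F} {f' : E →L[ℝ] F} {x : E} {c : ℝ}

theorem HasFDerivAt.mul_norm_le_norm_apply (hf : HasFDerivAt f f' x)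
    (hc : ∀ᶠ y in 𝓝 x, c * ‖y - x‖ ≤ ‖f y - f x‖) (v : E) : c * ‖v‖ ≤ ‖f' v‖ := by
  have hray : Tendsto (fun t : ℝ => x + t⁻¹ • v) atTop (𝓝 x) := by
    simpa using tendsto_const_nhds.add ((tendsto_inv_atTop_zero (𝕜 := ℝ)).smul_const v)
  refine ge_of_tendsto (hf.lim_real v).norm ?_
  filter_upwards [hray.eventually hc, eventually_gt_atTop 0] with t hbound ht
  calc c * ‖v‖ = t * (c * ‖t⁻¹ • v‖) := by
        rw [norm_smul, Real.norm_of_nonneg (inv_nonneg.2 ht.le)]; field_simp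
    _ ≤ t * ‖f (x + t⁻¹ • v) - f x‖ := by simpa using mul_le_mul_of_nonneg_left hbound ht.le
    _ = ‖t • (f (x + t⁻¹ • v) - f x)‖ := by rw [norm_smul, Real.norm_of_nonneg ht.le]

theorem HasFDerivAt.injective_of_eventually_mul_norm_sub_le (hf : HasFDerivAt f f' x)
    (hc₀ : 0 < c) (hc : ∀ᶠ y in 𝓝 x, c * ‖y - x‖ ≤ ‖f y - f x‖) : Function.Injective f' := by
  refine (injective_iff_map_eq_zero f').2 fun v hv => norm_le_zero_iff.1 ?_
  have hbound := hf.mul_norm_le_norm_apply hc v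
  rw [hv, norm_zero] at hbound
  exact nonpos_of_mul_nonpos_right hbound hc₀

end FDeriv

theorem isUniformEmbedding_domRestrict_of_mul_dist_le {α β : Type*} [MetricSpace α]
    [PseudoMetricSpace β] {f : α → β} {s : Set α} {c C : ℝ} (hc : 0 < c)
    (h : ∀ x ∈ s, ∀ y ∈ s, c * dist x y ≤ dist (f x) (f y) ∧ dist (f x) (f y) ≤ C * dist x y) :
    IsUniformEmbedding (s.domRestrict f) := by
  have hlip : LipschitzWith (Real.toNNReal C) (s.domRestrict f) :=
    LipschitzWith.of_dist_le' fun x y => (h x x.2 y y.2).2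
  have hanti : AntilipschitzWith (Real.toNNReal c⁻¹) (s.domRestrict f) := by
    refine AntilipschitzWith.of_le_mul_dist fun x y => ?_
    rw [Real.coe_toNNReal _ (inv_nonneg.2 hc.le), le_inv_mul_iff₀ hc]
    exact (h x x.2 y y.2).1
  exact hanti.isUniformEmbedding hlip.uniformContinuous

theorem lipschitz_regular_parametrization_smooth_general {n p : ℕ}
    (X : Set (EuclideanSpace ℝ (Fin p))) (x₀ : EuclideanSpace ℝ (Fin p))
    (U : Set (EuclideanSpace ℝ (Fin n))) (hUo : IsOpen U)
    (hU0 : (0 : EuclideanSpace ℝ (Fin n)) ∈ U)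
    (f : EuclideanSpace ℝ (Fin n) → EuclideanSpace ℝ (Fin p))
    (hf : AnalyticOnNhd ℝ f U)
    (V : Set (EuclideanSpace ℝ (Fin p))) (hVo : IsOpen V) (hV0 : x₀ ∈ V)
    (hfU : f '' U = X ∩ V)
    (c C : ℝ) (hc : 0 < c)
    (hbl : ∀ x ∈ U, ∀ x' ∈ U,
      c * ‖x - x'‖ ≤ ‖f x - f x'‖ ∧ ‖f x - f x'‖ ≤ C * ‖x - x'‖) :
    ∃ U' : Set (EuclideanSpace ℝ (Fin n)), ∃ V' : Set (EuclideanSpace ℝ (Fin p)),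
      IsOpen U' ∧ (0 : EuclideanSpace ℝ (Fin n)) ∈ U' ∧ U' ⊆ U ∧
      IsOpen V' ∧ x₀ ∈ V' ∧ V' ⊆ V ∧
      (∀ x ∈ U', Function.Injective (fderiv ℝ f x)) ∧
      f '' U' = X ∩ V' ∧
      Topology.IsEmbedding (U'.restrict f) := by
  have hderiv : ∀ x ∈ U, Function.Injective (fderiv ℝ f x) := fun x hx =>
    (hf x hx).differentiableAt.hasFDerivAt.injective_of_eventually_mul_norm_sub_le hc <| by
      filter_upwards [hUo.mem_nhds hx] with y hy using (hbl y hy x hx).1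
  have hemb : IsUniformEmbedding (U.domRestrict f) :=
    isUniformEmbedding_domRestrict_of_mul_dist_le hc <| by simpa only [dist_eq_norm] using hbl
  exact ⟨U, V, hUo, hU0, subset_rfl, hVo, hV0, subset_rfl, hderiv, hfU, hemb.isEmbedding⟩

/-- let `X ⊆ ℝᵖ`, `x₀ ∈ X`, and suppose `X` is locally parametrized at `x₀`
as the image `f(U) = X ∩ V` of a real analytic map `f` which is bi-Lipschitz onto its
image.  Then there are open neighborhoods `U' ⊆ U` of `0` and `V' ⊆ V` of `x₀` such that
`Df(x)` is injective for every `x ∈ U'` and `f` restricted to `U'` is a homeomorphism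
(an embedding) onto `X ∩ V'`; in particular `X` is a smooth `n`-dimensional submanifold
of `ℝᵖ` near `x₀`. -/
theorem lipschitz_regular_parametrization_smooth {n p : ℕ}
    (X : Set (EuclideanSpace ℝ (Fin p))) (x₀ : EuclideanSpace ℝ (Fin p)) (hx₀ : x₀ ∈ X)
    (U : Set (EuclideanSpace ℝ (Fin n))) (hUo : IsOpen U)
    (hU0 : (0 : EuclideanSpace ℝ (Fin n)) ∈ U)
    (f : EuclideanSpace ℝ (Fin n) → EuclideanSpace ℝ (Fin p))
    (hf : AnalyticOnNhd ℝ f U) (hf0 : f 0 = x₀)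
    (V : Set (EuclideanSpace ℝ (Fin p))) (hVo : IsOpen V) (hV0 : x₀ ∈ V)
    (hfU : f '' U = X ∩ V)
    (c C : ℝ) (hc : 0 < c) (hC : 0 < C)
    (hbl : ∀ x ∈ U, ∀ x' ∈ U,
      c * ‖x - x'‖ ≤ ‖f x - f x'‖ ∧ ‖f x - f x'‖ ≤ C * ‖x - x'‖) :
    ∃ U' : Set (EuclideanSpace ℝ (Fin n)), ∃ V' : Set (EuclideanSpace ℝ (Fin p)),
      IsOpen U' ∧ (0 : EuclideanSpace ℝ (Fin n)) ∈ U' ∧ U' ⊆ U ∧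
      IsOpen V' ∧ x₀ ∈ V' ∧ V' ⊆ V ∧
      (∀ x ∈ U', Function.Injective (fderiv ℝ f x)) ∧
      f '' U' = X ∩ V' ∧
      Topology.IsEmbedding (U'.restrict f) :=
  lipschitz_regular_parametrization_smooth_general X x₀ U hUo hU0 f hf V hVo hV0 hfU c C hc hbl
end
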